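/- arXiv:1507.03915 — 2 statements merged into one kernel-verified Lean document; each statement's English description precedes it below -/
import Mathlib

section
/- Let A be a complete discrete valuation ring with residue field k, and suppose A and k have the same characteristic and k is perfect. Then A is isomorphic (as a ring) to the formal power series ring k[[T]]. -/
/-!
A section `s : k →+* A` of the residue map makes `A` a `k`-algebra in which a uniformizer `π`
is topologically nilpotent, so `σ ↦ ∑ s(σₙ) πⁿ` is a ring map `k⟦X⟧ → A`. It is injective because
every nonzero power series is a unit times a power of `X`, and surjective because every `a : A`
has a `π`-adic digit expansion `a = ∑ s(aₙ) πⁿ`.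

The section exists in both characteristics. In characteristic `p` the Teichmüller map of the
perfect field `k` is additive, since `p`-th powers are additive in `A`. In characteristic zero
`k` is formally smooth over `ℚ` (every field extension of `ℚ` is separably generated), so the
identity of `k = A ⧸ 𝔪` lifts through the complete ring `A`.
-/

open IsLocalRing PowerSeries

theorem PowerSeries.exists_ringHom_extend_eval₂ {R S : Type*} [CommRing R] [CommRing S]
    {I : Ideal S} [IsAdicComplete I S] (φ : R →+* S) {a : S} (ha : a ∈ I) :
    ∃ Φ : R⟦X⟧ →+* S, ∀ q : Polynomial R, Φ q = q.eval₂ φ a := by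
  let : WithIdeal S := ⟨I⟩
  let : UniformSpace R := ⊥
  have : DiscreteUniformity R := ⟨rfl⟩
  obtain ⟨_, _⟩ := (IsAdic.isAdicComplete_iff (I := I) rfl).mp inferInstance
  have hφ : Continuous φ := continuous_of_discreteTopology
  have ha' : HasEval a := WithIdeal.isTopologicallyNilpotent_of_mem ha
  exact ⟨eval₂Hom hφ ha', fun q => by rw [coe_eval₂Hom, eval₂_coe]⟩

theorem IsDiscreteValuationRing.injective_of_map_irreducible_ne_zero {R S : Type*} [CommRing R]
    [IsDomain R] [IsDiscreteValuationRing R] [CommRing S] [IsDomain S] (f : R →+* S) {ϖ : R}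
    (hϖ : Irreducible ϖ) (hf : f ϖ ≠ 0) : Function.Injective f := by
  refine (injective_iff_map_eq_zero f).mpr fun x hx => ?_
  by_contra hx0
  obtain ⟨n, u, rfl⟩ := eq_unit_mul_pow_irreducible hx0 hϖ
  rw [map_mul, map_pow] at hx
  exact mul_ne_zero (u.isUnit.map f).ne_zero (pow_ne_zero n hf) hx

theorem PowerSeries.surjective_of_eq_eval₂_of_section {A : Type*} [CommRing A] [IsLocalRing A]
    [IsHausdorff (maximalIdeal A) A] {s : ResidueField A →+* A}
    (hs : (residue A).comp s = RingHom.id _) {π : A} (hπ : maximalIdeal A = Ideal.span {π})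
    (Φ : (ResidueField A)⟦X⟧ →+* A) (hΦ : ∀ q : Polynomial (ResidueField A), Φ q = q.eval₂ s π) :
    Function.Surjective Φ := by
  intro a
  have digit : ∀ b : A, ∃ c, b = s (residue A b) + π * c := fun b => by
    have : b - s (residue A b) ∈ Ideal.span {π} := by
      rw [← hπ, ← residue_eq_zero_iff, map_sub, ← RingHom.comp_apply, hs, RingHom.id_apply,
        sub_self]
    obtain ⟨c, hc⟩ := Ideal.mem_span_singleton'.mp this
    exact ⟨c, by linear_combination -hc⟩
  choose g hg using digit
  set σ := PowerSeries.mk fun n => residue A (g^[n] a)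
  have partial_sum : ∀ n, a = Φ (σ.trunc n) + π ^ n * g^[n] a := by
    intro n
    induction n with
    | zero => simp
    | succ n ih =>
      rw [trunc_succ, Polynomial.coe_add, map_add, hΦ (Polynomial.monomial _ _),
        Polynomial.eval₂_monomial, coeff_mk, Function.iterate_succ_apply']
      linear_combination ih + π ^ n * hg (g^[n] a)
  refine ⟨σ, (IsHausdorff.eq_iff_smodEq (I := maximalIdeal A)).mpr fun n => ?_⟩
  have hσ := congrArg Φ (eq_X_pow_mul_shift_add_trunc n σ)
  rw [map_add, map_mul, map_pow, ← Polynomial.coe_X, hΦ, Polynomial.eval₂_X] at hσ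
  rw [SModEq.sub_mem, smul_eq_mul, Ideal.mul_top, hπ, Ideal.span_singleton_pow,
    Ideal.mem_span_singleton]
  exact ⟨Φ (mk fun i => coeff (i + n) σ) - g^[n] a, by linear_combination hσ - partial_sum n⟩

theorem IsDiscreteValuationRing.nonempty_ringEquiv_powerSeries_of_section (A : Type*)
    [CommRing A] [IsDomain A] [IsDiscreteValuationRing A]
    [IsAdicComplete (IsLocalRing.maximalIdeal A) A] {s : ResidueField A →+* A}
    (hs : (residue A).comp s = RingHom.id _) :
    Nonempty (A ≃+* (ResidueField A)⟦X⟧) := by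
  obtain ⟨π, hπ⟩ := exists_irreducible A
  obtain ⟨Φ, hΦ⟩ :=
    exists_ringHom_extend_eval₂ s (hπ.maximalIdeal_eq ▸ Ideal.mem_span_singleton_self π)
  have hΦX : Φ X = π := by rw [← Polynomial.coe_X, hΦ, Polynomial.eval₂_X]
  have hinj := injective_of_map_irreducible_ne_zero Φ X_irreducible (hΦX ▸ hπ.ne_zero)
  have hsurj := surjective_of_eq_eval₂_of_section hs hπ.maximalIdeal_eq Φ hΦ
  exact ⟨(RingEquiv.ofBijective Φ ⟨hinj, hsurj⟩).symm⟩

namespace Perfection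

variable {p : ℕ} [Fact p.Prime] {R : Type*} [CommRing R] {I : Ideal R} [CharP (R ⧸ I) p]
  [IsAdicComplete I R] [CharP R p]

theorem teichmuller₀_add (x y : Perfection (R ⧸ I) p) :
    teichmuller₀ p I (x + y) = teichmuller₀ p I x + teichmuller₀ p I y := by
  refine teichmuller₀_spec fun n => ⟨(coeff _ p n x).out + (coeff _ p n y).out, by simp, ?_⟩
  rw [add_pow_char_pow]
  exact (teichmuller₀_sModEq (by simp)).symm.add (teichmuller₀_sModEq (by simp)).symm

variable (p I) in
noncomputable def teichmullerRingHom : Perfection (R ⧸ I) p →+* R :=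
  { teichmuller₀ p I with map_add' := teichmuller₀_add }

end Perfection

theorem Ideal.Quotient.exists_section_of_charP {p : ℕ} [Fact p.Prime] {R : Type*} [CommRing R]
    (I : Ideal R) [CharP R p] [CharP (R ⧸ I) p] [PerfectRing (R ⧸ I) p] [IsAdicComplete I R] :
    ∃ s : R ⧸ I →+* R, (Ideal.Quotient.mk I).comp s = RingHom.id _ :=
  ⟨(Perfection.teichmullerRingHom p I).comp (PerfectionMap.id p (R ⧸ I)).equiv.toRingHom,
    RingHom.ext fun x => by
      simp [Perfection.teichmullerRingHom, (PerfectionMap.id p (R ⧸ I)).comp_equiv]⟩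

theorem Algebra.FormallySmooth.of_algebra_rat (K : Type*) [Field K] [Algebra ℚ K] :
    Algebra.FormallySmooth ℚ K := by
  have : CharZero K := charZero_of_injective_algebraMap (algebraMap ℚ K).injective
  obtain ⟨s, hs⟩ := exists_isTranscendenceBasis ℚ K
  have := hs.isAlgebraic_field
  exact .of_algebraicIndependent_of_isSeparable hs.1

theorem IsLocalRing.exists_section_of_charZero (A : Type*) [CommRing A] [IsLocalRing A]
    [IsAdicComplete (maximalIdeal A) A] [hk : CharZero (ResidueField A)] :
    ∃ s : ResidueField A →+* A, (residue A).comp s = RingHom.id _ := by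
  have : CharZero (A ⧸ maximalIdeal A) := hk
  let : Algebra ℚ A := ((EqualCharZero.nonempty_algebraRat_iff A).mpr fun _ hI =>
    (Ideal.Quotient.factor (le_maximalIdeal hI)).charZero).some
  have := Algebra.FormallySmooth.of_algebra_rat (ResidueField A)
  obtain ⟨g, hg⟩ := Algebra.FormallySmooth.exists_mkₐ_comp_eq_of_isAdicComplete
    (@RingHom.toRatAlgHom (ResidueField A) (A ⧸ maximalIdeal A) _ _ _
      (Ideal.instAlgebraQuotient ℚ _) (RingHom.id _))
  exact ⟨g, congrArg AlgHom.toRingHom hg⟩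

/-- Cohen structure theorem, equicharacteristic DVR case: a complete discrete
valuation ring whose residue field is perfect and of the same characteristic as the
ring is isomorphic to the power series ring over its residue field. -/
theorem stmt9 (A : Type) [CommRing A] [IsDomain A] [IsDiscreteValuationRing A]
    [IsAdicComplete (maximalIdeal A) A]
    (p : ℕ) (hA : CharP A p) (hk : CharP (ResidueField A) p)
    [PerfectField (ResidueField A)] :
    Nonempty (A ≃+* PowerSeries (ResidueField A)) := by
  obtain ⟨s, hs⟩ : ∃ s : ResidueField A →+* A, (residue A).comp s = RingHom.id _ := by
    rcases CharP.char_is_prime_or_zero A p with hp | rfl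
    · have : Fact p.Prime := ⟨hp⟩
      have : CharP (A ⧸ maximalIdeal A) p := hk
      have : PerfectRing (A ⧸ maximalIdeal A) p :=
        (PerfectField.toPerfectRing p : PerfectRing (ResidueField A) p)
      exact Ideal.Quotient.exists_section_of_charP (maximalIdeal A)
    · have : CharZero (ResidueField A) := CharP.charP_to_charZero _
      exact exists_section_of_charZero A
  exact IsDiscreteValuationRing.nonempty_ringEquiv_powerSeries_of_section A hs
end

section
/- Let k be a field, A a k-algebra, and M, N two A-modules. Then there is a natural isomorphism of A-modules M ⊗_A N ≅ A ⊗_{A ⊗_k A} (M ⊗_k N), where A is an A ⊗_k A-algebra via the multiplication map and M ⊗_k N is an A ⊗_k A-module via the two factors. -/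
/-! The canonical map `M ⊗_k N → M ⊗_A N` turns the action of `a ⊗ b` into multiplication by
`ab`, so `a ⊗ t ↦ a • [t]` is well defined on `A ⊗_{A ⊗_k A} (M ⊗_k N)`. Its inverse is
`m ⊗ n ↦ 1 ⊗ (m ⊗ n)`, which is `A`-bilinear because `a ⊗ 1` and `1 ⊗ a` both act on `A` as
multiplication by `a`. -/

open TensorProduct

noncomputable section

variable (k A M N : Type) [Field k] [CommRing A] [Algebra k A]
  [AddCommGroup M] [Module k M] [Module A M] [IsScalarTower k A M]
  [AddCommGroup N] [Module k N] [Module A N] [IsScalarTower k A N]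

/-- The action of `A ⊗_k A` on `M ⊗_k N` through the two factors:
`(a ⊗ b) • (m ⊗ n) = (a • m) ⊗ (b • n)`. -/
def factorwiseModule : Module (A ⊗[k] A) (M ⊗[k] N) :=
  Module.compHom _
    ((Module.endTensorEndAlgHom (R := k) (S := k) (A := k) (M := M) (N := N)).comp
      (Algebra.TensorProduct.map (Algebra.lsmul k k M) (Algebra.lsmul k k N))).toRingHom

/-- The action of `A ⊗_k A` on `A` through the multiplication map `a ⊗ b ↦ ab`. -/
def diagonalModule : Module (A ⊗[k] A) A :=
  Module.compHom _ (Algebra.TensorProduct.lmul' k (S := A)).toRingHom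

attribute [local instance] factorwiseModule diagonalModule

namespace ReductionToDiagonal

open Algebra.TensorProduct (lmul' lmul'_apply_tmul)

def diagonalTensorModule : Module A (A ⊗[A ⊗[k] A] (M ⊗[k] N)) :=
  Module.compHom _ (Algebra.TensorProduct.includeLeftRingHom (R := k) (A := A) (B := A))

attribute [local instance] diagonalTensorModule

lemma tmul_smul_tmul (a b : A) (m : M) (n : N) :
    (a ⊗ₜ[k] b) • (m ⊗ₜ[k] n) = (a • m) ⊗ₜ[k] (b • n) := rfl

lemma diagonalModule_smul (x : A ⊗[k] A) (c : A) : x • c = lmul' k x * c := rfl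

lemma one_tmul_smul (x : A ⊗[k] A) (t : M ⊗[k] N) :
    (1 : A) ⊗ₜ[A ⊗[k] A] (x • t) = lmul' k x ⊗ₜ t := by
  rw [← smul_tmul, diagonalModule_smul, mul_one]

lemma one_tmul_smul_tmul (a b : A) (m : M) (n : N) :
    (1 : A) ⊗ₜ[A ⊗[k] A] ((a • m) ⊗ₜ[k] (b • n)) = (a * b) ⊗ₜ (m ⊗ₜ n) := by
  rw [← tmul_smul_tmul, one_tmul_smul, lmul'_apply_tmul]

lemma smul_one_tmul (a : A) (t : M ⊗[k] N) :
    a • ((1 : A) ⊗ₜ[A ⊗[k] A] t) = a ⊗ₜ t := by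
  change (a ⊗ₜ[k] (1 : A)) • ((1 : A) ⊗ₜ[A ⊗[k] A] t) = a ⊗ₜ t
  rw [smul_tmul', diagonalModule_smul, lmul'_apply_tmul, mul_one, mul_one]

abbrev toTensorOver : M ⊗[k] N →ₗ[A] M ⊗[A] N := mapOfCompatibleSMul A k A M N

lemma toTensorOver_smul (x : A ⊗[k] A) (t : M ⊗[k] N) :
    toTensorOver k A M N (x • t) = lmul' k x • toTensorOver k A M N t := by
  induction x with
  | zero => simp
  | add x y hx hy => rw [add_smul, map_add, hx, hy, map_add, add_smul]
  | tmul a b =>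
    induction t with
    | zero => simp
    | add t u ht hu => rw [smul_add, map_add, ht, hu, map_add, smul_add]
    | tmul m n =>
      rw [tmul_smul_tmul, lmul'_apply_tmul, mapOfCompatibleSMul_tmul, mapOfCompatibleSMul_tmul,
        ← smul_tmul', tmul_smul, smul_smul, mul_comm]

def toDiagonal : M ⊗[A] N →ₗ[A] A ⊗[A ⊗[k] A] (M ⊗[k] N) :=
  TensorProduct.lift <| LinearMap.mk₂ A (fun m n ↦ (1 : A) ⊗ₜ (m ⊗ₜ[k] n))
    (fun m m' n ↦ by rw [add_tmul, tmul_add])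
    (fun a m n ↦ by
      simpa only [one_smul, mul_one, smul_one_tmul] using one_tmul_smul_tmul k A M N a 1 m n)
    (fun m n n' ↦ by rw [tmul_add, tmul_add])
    (fun a m n ↦ by
      simpa only [one_smul, one_mul, smul_one_tmul] using one_tmul_smul_tmul k A M N 1 a m n)

lemma toDiagonal_tmul (m : M) (n : N) :
    toDiagonal k A M N (m ⊗ₜ n) = (1 : A) ⊗ₜ (m ⊗ₜ[k] n) := rfl

lemma toDiagonal_toTensorOver (t : M ⊗[k] N) :
    toDiagonal k A M N (toTensorOver k A M N t) = (1 : A) ⊗ₜ t := by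
  induction t with
  | zero => simp
  | add t u ht hu => rw [map_add, map_add, ht, hu, tmul_add]
  | tmul m n => rfl

def ofDiagonal : A ⊗[A ⊗[k] A] (M ⊗[k] N) →+ M ⊗[A] N :=
  liftAddHom (LinearMap.toAddMonoidHom'.comp
      ((LinearMap.lsmul A (M ⊗[A] N)).compl₂ (toTensorOver k A M N)).toAddMonoidHom)
    (fun x a t ↦ by
      change (x • a) • toTensorOver k A M N t = a • toTensorOver k A M N (x • t)
      rw [toTensorOver_smul, diagonalModule_smul, mul_smul, smul_comm])

lemma ofDiagonal_tmul (a : A) (t : M ⊗[k] N) :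
    ofDiagonal k A M N (a ⊗ₜ t) = a • toTensorOver k A M N t := rfl

lemma ofDiagonal_toDiagonal (x : M ⊗[A] N) : ofDiagonal k A M N (toDiagonal k A M N x) = x := by
  induction x with
  | zero => simp
  | add x y hx hy => rw [map_add, map_add, hx, hy]
  | tmul m n => rw [toDiagonal_tmul, ofDiagonal_tmul, mapOfCompatibleSMul_tmul, one_smul]

lemma toDiagonal_ofDiagonal (z : A ⊗[A ⊗[k] A] (M ⊗[k] N)) :
    toDiagonal k A M N (ofDiagonal k A M N z) = z := by
  induction z with
  | zero => simp
  | add z w hz hw => rw [map_add, map_add, hz, hw]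
  | tmul a t => rw [ofDiagonal_tmul, map_smul, toDiagonal_toTensorOver, smul_one_tmul]

def tensorEquivDiagonal : M ⊗[A] N ≃ₗ[A] A ⊗[A ⊗[k] A] (M ⊗[k] N) where
  __ := toDiagonal k A M N
  invFun := ofDiagonal k A M N
  left_inv := ofDiagonal_toDiagonal k A M N
  right_inv := toDiagonal_ofDiagonal k A M N

end ReductionToDiagonal

open ReductionToDiagonal in
/-- Reduction to the diagonal: `M ⊗_A N ≅ A ⊗_{A ⊗_k A} (M ⊗_k N)` as `A`-modules. -/
theorem stmt12 :
    letI : Module (A ⊗[k] A) (M ⊗[k] N) := factorwiseModule k A M N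
    letI : Module (A ⊗[k] A) A := diagonalModule k A
    letI : Module A (TensorProduct (A ⊗[k] A) A (M ⊗[k] N)) :=
      Module.compHom _ (Algebra.TensorProduct.includeLeftRingHom (R := k) (A := A) (B := A))
    Nonempty ((TensorProduct A M N) ≃ₗ[A] TensorProduct (A ⊗[k] A) A (M ⊗[k] N)) :=
  ⟨tensorEquivDiagonal k A M N⟩

end
end
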